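/- (Theorem: no isosceles fixed point when M ≥ 4m.) Let κ > 0 and M, m > 0 with M ≥ 4m. Then there exist no x, y with 0 < x, y < κ^{-1/2} and κ(x² + y²) = 1 such that the masses m₁ = m₂ = M at q₁ = (x, y, 0), q₂ = (−x, y, 0) and m₃ = m at q₃ = (0, −κ^{-1/2}, 0) form a fixed point of the curved 3-body problem, i.e., such that ∑_{j≠i} m_j (q_j − a_ij q_i)/(1 − a_ij²)^{3/2} = 0 for each i ∈ {1,2,3}, where a_ij = κ(x_i x_j + y_i y_j). -/

import Mathlib

open Real Finset

noncomputable section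

/-- The isosceles configuration on the equator of `S²_κ`: masses `M, M, m` at
`(x, y, 0)`, `(-x, y, 0)`, `(0, -κ^{-1/2}, 0)`. -/
def qIso (κ x y : ℝ) : Fin 3 → ℝ × ℝ × ℝ :=
  ![(x, y, 0), (-x, y, 0), (0, -κ ^ (-(1:ℝ)/2), 0)]

/-- `a_ij = κ(x_i x_j + y_i y_j)` for the isosceles configuration. -/
def aIso (κ x y : ℝ) (i j : Fin 3) : ℝ :=
  κ * ((qIso κ x y i).1 * (qIso κ x y j).1 + (qIso κ x y i).2.1 * (qIso κ x y j).2.1)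

/-- **No isosceles fixed point when `M ≥ 4m`.** For `κ > 0` and masses `M ≥ 4m > 0`,
there are no `x, y` with `0 < x, y < κ^{-1/2}` and `κ(x² + y²) = 1` such that masses
`M, M` at `(±x, y, 0)` and `m` at `(0, -κ^{-1/2}, 0)` form a fixed point of the
curved 3-body problem. -/
theorem no_isosceles_fixed_point_of_large_mass
    (κ : ℝ) (hκ : 0 < κ) (M m : ℝ) (hM : 0 < M) (hm : 0 < m) (hMm : 4 * m ≤ M) :
    ¬ ∃ x y : ℝ,
      0 < x ∧ x < κ ^ (-(1:ℝ)/2) ∧ 0 < y ∧ y < κ ^ (-(1:ℝ)/2) ∧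
      κ * (x ^ 2 + y ^ 2) = 1 ∧
      (∀ i : Fin 3,
        (∑ j ∈ univ.erase i,
          ((![M, M, m]) j / (1 - (aIso κ x y i j) ^ 2) ^ ((3:ℝ)/2)) •
            (qIso κ x y j - aIso κ x y i j • qIso κ x y i))
        = (0 : ℝ × ℝ × ℝ)) := by
  rintro ⟨x, y, hx, hxr, hy, hyr, hcirc, hfix⟩
  have h := hfix 0
  rw [show (univ.erase (0 : Fin 3)) = {1, 2} by decide] at h
  rw [Finset.sum_insert (by decide), Finset.sum_singleton] at h
  simp [qIso, aIso, Prod.ext_iff] at h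
  obtain ⟨E, -⟩ := h
  set r : ℝ := κ ^ (-(1:ℝ)/2) with hrdef
  set s : ℝ := κ ^ ((1:ℝ)/2) with hsdef
  have hs : 0 < s := Real.rpow_pos_of_pos hκ _
  have hr0 : 0 < r := Real.rpow_pos_of_pos hκ _
  have hss : s * s = κ := by rw [hsdef, ← Real.rpow_add hκ]; norm_num
  have hsr : s * r = 1 := by rw [hsdef, hrdef, ← Real.rpow_add hκ]; norm_num
  have hκr : κ * r = s := by
    calc κ * r = s * (s * r) := by rw [← hss]; ring
    _ = s := by rw [hsr, mul_one]
  have cube : ∀ t : ℝ, 0 < t → (t ^ 2) ^ ((3:ℝ)/2) = t ^ 3 := by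
    intro t ht
    rw [← Real.rpow_natCast t 2, ← Real.rpow_mul ht.le,
      show ((2:ℕ):ℝ) * (3/2) = ((3:ℕ):ℝ) by norm_num, Real.rpow_natCast]
  have h1 : 1 - (κ * (-(x * x) + y * y)) ^ 2 = (2 * κ * x * y) ^ 2 := by
    linear_combination (-(1 + κ * (x^2 + y^2))) * hcirc
  have h2 : 1 - (κ * (y * r)) ^ 2 = (s * x) ^ 2 := by
    linear_combination (-(y^2) * (κ*r + s)) * hκr + (-(x^2+y^2)) * hss - hcirc
  rw [h1, h2, cube _ (by positivity), cube _ (by positivity)] at E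
  have hd1 : (2*κ*x*y)^3 ≠ 0 := by positivity
  have hd2 : (s*x)^3 ≠ 0 := by positivity
  field_simp at E
  have key2 : (M * κ - 4*m*κ^2*y^2) * (2*s*κ*x^4*y^2) = 0 := by
    linear_combination (-x^4)*E + (-(2*κ*x^4*y^2*M*s))*hss
      + (8*m*κ^3*x^4*y^4)*hκr + (M*s^3*x^4)*hcirc
  have key : M * κ = 4*m*κ^2*y^2 := by
    rcases mul_eq_zero.mp key2 with h' | h'
    · linarith
    · exact absurd h' (by positivity)
  have hy2 : κ * y^2 < 1 := by nlinarith [mul_pos hκ (mul_pos hx hx)]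
  nlinarith [key, hy2, mul_pos hm hκ, mul_pos (mul_pos hm hκ) hκ]
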